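/- Let (Π_α) be a family of orthogonal projections on L_2(E, μ) and g : E → [0,1] measurable such that each 1 + (g−1)Π_α is invertible and sup_α ‖(1+(g−1)Π_α)^{-1}‖ = C < ∞. Let f ≥ 0 be bounded measurable with sup_α tr √f Π_α √f < ∞. Then sup_α tr √f Π_α^g √f < ∞, where Π_α^g = √g Π_α (1+(g−1)Π_α)^{-1} √g; moreover, if B ⊆ E is Borel with sup_α tr χ_{E∖B} √f Π_α √f χ_{E∖B} < ε, then sup_α tr χ_{E∖B} √f Π_α^g √f χ_{E∖B} ≤ C ε. -/

import Mathlib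

open ContinuousLinearMap Filter MeasureTheory
open scoped NNReal ENNReal Topology

noncomputable section

variable {H : Type*} [NormedAddCommGroup H] [InnerProductSpace ℂ H] [CompleteSpace H]
variable {ι : Type*}

/-- `T` is Hilbert–Schmidt w.r.t. the Hilbert basis `e`. -/
def IsHS (e : HilbertBasis ι ℂ H) (T : H →L[ℂ] H) : Prop :=
  Summable fun i => ‖T (e i)‖ ^ 2

/-- Hilbert–Schmidt norm of `T` w.r.t. the Hilbert basis `e`. -/
noncomputable def hsNorm (e : HilbertBasis ι ℂ H) (T : H →L[ℂ] H) : ℝ :=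
  Real.sqrt (∑' i, ‖T (e i)‖ ^ 2)

/-- Trace of `T` w.r.t. the Hilbert basis `e`. -/
noncomputable def opTrace (e : HilbertBasis ι ℂ H) (T : H →L[ℂ] H) : ℂ :=
  ∑' i, (inner ℂ (e i : H) (T (e i)) : ℂ)

/-- `T` is trace class: it is a product of two Hilbert–Schmidt operators. -/
def IsTraceClass (e : HilbertBasis ι ℂ H) (T : H →L[ℂ] H) : Prop :=
  ∃ A B : H →L[ℂ] H, IsHS e A ∧ IsHS e B ∧ T = adjoint A ∘L B

/-- Trace norm `tr √(T* T)` w.r.t. the Hilbert basis `e`. -/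
noncomputable def traceNorm (e : HilbertBasis ι ℂ H) (T : H →L[ℂ] H) : ℝ :=
  ∑' i, ((inner ℂ (e i : H) ((CFC.sqrt (adjoint T * T)) (e i)) : ℂ)).re

/-- The orthogonal projection onto `K`, as an operator `H →L[ℂ] H`. -/
noncomputable def projCLM (K : Submodule ℂ H) [K.HasOrthogonalProjection] : H →L[ℂ] H :=
  K.subtypeL ∘L K.orthogonalProjectionOnto

open scoped InnerProductSpace

/-!
Write `R = (1 + (g - 1) Π)⁻¹`. As `Π` is idempotent, `1 + (g - 1) Π` is the identity on the
range of `1 - Π`, hence so is `R`, and `Π R = Π R Π`. Since `√f`, `√g` and `χ = χ_{E∖B}` commute,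
this gives `χ √f Π^g √f χ = A* R A` with `A = Π √f χ √g`, while `χ √f Π √f χ = B* B` with
`B = Π √f χ`. Therefore `tr χ √f Π^g √f χ ≤ ‖R‖ ‖A‖²_HS ≤ C ‖√g‖² ‖B‖²_HS ≤ C tr χ √f Π √f χ`,
and `χ = 1` gives the uniform bound.
-/

section HilbertSchmidt

variable {e : HilbertBasis ι ℂ H}

section
omit [CompleteSpace H]

theorem HilbertBasis.hasSum_norm_inner_sq (e : HilbertBasis ι ℂ H) (x : H) :
    HasSum (fun i => ‖⟪(e i : H), x⟫_ℂ‖ ^ 2) (‖x‖ ^ 2) := by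
  simpa [e.repr_apply_apply] using lp.hasSum_norm (p := 2) (by norm_num) (e.repr x)

theorem HilbertBasis.tsum_enorm_inner_sq (e : HilbertBasis ι ℂ H) (x : H) :
    ∑' i, ‖⟪(e i : H), x⟫_ℂ‖ₑ ^ 2 = ‖x‖ₑ ^ 2 := by
  simp only [← ofReal_norm, ← ENNReal.ofReal_pow (norm_nonneg _)]
  rw [← ENNReal.ofReal_tsum_of_nonneg (fun _ => by positivity) (e.hasSum_norm_inner_sq x).summable,
    (e.hasSum_norm_inner_sq x).tsum_eq]

-- Valued in `ℝ≥0∞` so that the double sums below can be swapped without summability conditions.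
def hsENormSq (e : HilbertBasis ι ℂ H) (T : H →L[ℂ] H) : ℝ≥0∞ :=
  ∑' i, ‖T (e i)‖ₑ ^ 2

theorem isHS_iff_hsENormSq_ne_top {T : H →L[ℂ] H} : IsHS e T ↔ hsENormSq e T ≠ ⊤ := by
  simp only [IsHS, hsENormSq, enorm_eq_nnnorm, ← ENNReal.coe_pow,
    ENNReal.tsum_coe_ne_top_iff_summable_coe, NNReal.coe_pow, coe_nnnorm]

theorem toReal_hsENormSq (T : H →L[ℂ] H) : (hsENormSq e T).toReal = ∑' i, ‖T (e i)‖ ^ 2 := by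
  rw [hsENormSq, ENNReal.tsum_toReal_eq fun _ => by finiteness]
  simp [ENNReal.toReal_pow]

theorem hsENormSq_comp_le_left (S T : H →L[ℂ] H) :
    hsENormSq e (S ∘L T) ≤ ‖S‖ₑ ^ 2 * hsENormSq e T := by
  rw [hsENormSq, hsENormSq, ← ENNReal.tsum_mul_left]
  refine ENNReal.tsum_le_tsum fun i => ?_
  rw [← mul_pow]
  exact pow_le_pow_left₀ (zero_le ..) (S.le_opENorm _) 2

theorem IsHS.comp_left {T : H →L[ℂ] H} (hT : IsHS e T) (S : H →L[ℂ] H) : IsHS e (S ∘L T) := by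
  rw [isHS_iff_hsENormSq_ne_top] at hT ⊢
  exact ne_top_of_le_ne_top (by finiteness) (hsENormSq_comp_le_left S T)

end

theorem hsENormSq_adjoint (T : H →L[ℂ] H) : hsENormSq e (adjoint T) = hsENormSq e T :=
  calc hsENormSq e (adjoint T)
      = ∑' i, ∑' j, ‖⟪(e j : H), adjoint T (e i)⟫_ℂ‖ₑ ^ 2 := by
        simp only [hsENormSq, e.tsum_enorm_inner_sq]
    _ = ∑' j, ∑' i, ‖⟪(e i : H), T (e j)⟫_ℂ‖ₑ ^ 2 := by
        rw [ENNReal.tsum_comm]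
        simp only [adjoint_inner_right, ← ofReal_norm, norm_inner_symm]
    _ = hsENormSq e T := by simp only [hsENormSq, e.tsum_enorm_inner_sq]

theorem hsENormSq_comp_le_right (T S : H →L[ℂ] H) :
    hsENormSq e (T ∘L S) ≤ ‖S‖ₑ ^ 2 * hsENormSq e T := by
  calc hsENormSq e (T ∘L S) = hsENormSq e (adjoint S ∘L adjoint T) := by
        rw [← adjoint_comp, hsENormSq_adjoint]
    _ ≤ ‖adjoint S‖ₑ ^ 2 * hsENormSq e (adjoint T) := hsENormSq_comp_le_left _ _
    _ = ‖S‖ₑ ^ 2 * hsENormSq e T := by rw [adjoint.enorm_map, hsENormSq_adjoint]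

theorem IsHS.comp_right {T : H →L[ℂ] H} (hT : IsHS e T) (S : H →L[ℂ] H) : IsHS e (T ∘L S) := by
  rw [isHS_iff_hsENormSq_ne_top] at hT ⊢
  exact ne_top_of_le_ne_top (by finiteness) (hsENormSq_comp_le_right T S)

theorem IsHS.tsum_comp_right_le {T : H →L[ℂ] H} (hT : IsHS e T) (S : H →L[ℂ] H) :
    ∑' i, ‖(T ∘L S) (e i)‖ ^ 2 ≤ ‖S‖ ^ 2 * ∑' i, ‖T (e i)‖ ^ 2 := by
  rw [isHS_iff_hsENormSq_ne_top] at hT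
  rw [← toReal_hsENormSq, ← toReal_hsENormSq, ← toReal_enorm, ← ENNReal.toReal_pow,
    ← ENNReal.toReal_mul]
  exact ENNReal.toReal_mono (by finiteness) (hsENormSq_comp_le_right T S)

theorem inner_adjoint_comp_apply (A B : H →L[ℂ] H) (x : H) :
    ⟪x, (adjoint A ∘L B) x⟫_ℂ = ⟪A x, B x⟫_ℂ := by
  rw [comp_apply, adjoint_inner_right]

theorem re_opTrace_adjoint_comp_self (A : H →L[ℂ] H) :
    (opTrace e (adjoint A ∘L A)).re = ∑' i, ‖A (e i)‖ ^ 2 := by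
  simp only [opTrace, inner_adjoint_comp_apply, inner_self_eq_norm_sq_to_K]
  norm_cast

theorem IsHS.of_isTraceClass_adjoint_comp_self {A : H →L[ℂ] H}
    (hA : IsTraceClass e (adjoint A ∘L A)) : IsHS e A := by
  obtain ⟨A₀, B₀, hA₀, hB₀, hAB⟩ := hA
  have hle : ∀ i, ‖A (e i)‖ ^ 2 ≤ (‖A₀ (e i)‖ ^ 2 + ‖B₀ (e i)‖ ^ 2) / 2 := fun i => by
    have : ‖A (e i)‖ ^ 2 = ‖⟪A₀ (e i), B₀ (e i)⟫_ℂ‖ := by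
      rw [← inner_adjoint_comp_apply, ← hAB, inner_adjoint_comp_apply, inner_self_eq_norm_sq_to_K]
      norm_cast
      exact (abs_of_nonneg (by positivity)).symm
    rw [this]
    nlinarith [norm_inner_le_norm (𝕜 := ℂ) (A₀ (e i)) (B₀ (e i)),
      sq_nonneg (‖A₀ (e i)‖ - ‖B₀ (e i)‖)]
  exact ((hA₀.add hB₀).div_const 2).of_nonneg_of_le (fun _ => sq_nonneg _) hle

theorem IsHS.re_opTrace_adjoint_comp_comp_le {A : H →L[ℂ] H} (hA : IsHS e A) (S : H →L[ℂ] H) :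
    (opTrace e (adjoint A ∘L S ∘L A)).re ≤ ‖S‖ * ∑' i, ‖A (e i)‖ ^ 2 := by
  have hle : ∀ i, ‖⟪(e i : H), (adjoint A ∘L S ∘L A) (e i)⟫_ℂ‖ ≤ ‖S‖ * ‖A (e i)‖ ^ 2 := fun i =>
    calc ‖⟪(e i : H), (adjoint A ∘L S ∘L A) (e i)⟫_ℂ‖
        = ‖⟪A (e i), S (A (e i))⟫_ℂ‖ := by rw [inner_adjoint_comp_apply, comp_apply]
      _ ≤ ‖A (e i)‖ * (‖S‖ * ‖A (e i)‖) := by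
        grw [norm_inner_le_norm, S.le_opNorm]
      _ = ‖S‖ * ‖A (e i)‖ ^ 2 := by ring
  have hsum : Summable fun i => ‖S‖ * ‖A (e i)‖ ^ 2 := hA.mul_left _
  have hsum' := hsum.of_norm_bounded hle
  rw [opTrace, Complex.re_tsum hsum', ← tsum_mul_left]
  exact (hsum'.mapL Complex.reCLM).tsum_le_tsum
    (fun i => (Complex.re_le_norm _).trans (hle i)) hsum

end HilbertSchmidt

section Algebra

variable {R : Type*} [Ring R]

theorem IsIdempotentElem.mul_mul_self_of_mul_one_add_mul_eq_one {p q r : R}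
    (hp : IsIdempotentElem p) (hr : r * (1 + q * p) = 1) : p * r * p = p * r := by
  have hp' : p * (1 - p) = 0 := by rw [mul_sub, mul_one, hp.eq, sub_self]
  have hr' : r * (1 - p) = 1 - p :=
    calc r * (1 - p) = r * ((1 + q * p) * (1 - p)) := by rw [add_mul, one_mul, mul_assoc, hp',
          mul_zero, add_zero]
      _ = 1 - p := by rw [← mul_assoc, hr, one_mul]
  calc p * r * p = p * r - p * (r * (1 - p)) := by noncomm_ring
    _ = p * r := by rw [hr', hp', sub_zero]

variable [StarRing R]

theorem IsStarProjection.mul_mul_eq_star_mul {p f : R} (hp : IsStarProjection p)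
    (hf : IsSelfAdjoint f) : f * p * f = star (p * f) * (p * f) := by
  rw [star_mul, hp.isSelfAdjoint.star_eq, hf.star_eq, ← mul_assoc, mul_assoc f p p,
    hp.isIdempotentElem.eq]

theorem IsStarProjection.compression_eq_star_mul_mul {p f g r x : R} (hp : IsStarProjection p)
    (hf : IsSelfAdjoint f) (hg : IsSelfAdjoint g) (hx : IsSelfAdjoint x) (hfg : Commute f g)
    (hgx : Commute g x) (hr : r * (1 + (g * g - 1) * p) = 1) :
    x * (f * (g * p * r * g) * f) * x = star (p * f * x * g) * r * (p * f * x * g) := by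
  have hpr := hp.isIdempotentElem.mul_mul_self_of_mul_one_add_mul_eq_one hr
  have hleft : x * f * g = g * x * f := by rw [mul_assoc, hfg.eq, ← mul_assoc, ← hgx.eq]
  have hright : g * f * x = f * x * g := by rw [← hfg.eq, mul_assoc, hgx.eq, ← mul_assoc]
  calc x * (f * (g * p * r * g) * f) * x = (x * f * g) * (p * r) * (g * f * x) := by
        simp only [mul_assoc]
    _ = (g * x * f) * (p * r * p) * (f * x * g) := by rw [hleft, hright, hpr]
    _ = star (p * f * x * g) * r * (p * f * x * g) := by
        simp only [star_mul, hp.isSelfAdjoint.star_eq, hf.star_eq, hg.star_eq, hx.star_eq,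
          mul_assoc]

end Algebra

section MulOperator

variable {E : Type*} [MeasurableSpace E]

def IsMulOperator (μ : Measure E) (σ : E → ℂ) (M : Lp ℂ 2 μ →L[ℂ] Lp ℂ 2 μ) : Prop :=
  ∀ φ : Lp ℂ 2 μ, (M φ : E → ℂ) =ᵐ[μ] fun x => σ x * φ x

namespace IsMulOperator

variable {μ : Measure E} {σ τ : E → ℂ} {M N : Lp ℂ 2 μ →L[ℂ] Lp ℂ 2 μ}

theorem comp (hM : IsMulOperator μ σ M) (hN : IsMulOperator μ τ N) :
    IsMulOperator μ (σ * τ) (M ∘L N) := fun φ => by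
  filter_upwards [hM (N φ), hN φ] with x hMx hNx
  rw [comp_apply, hMx, hNx, Pi.mul_apply, mul_assoc]

theorem commute (hM : IsMulOperator μ σ M) (hN : IsMulOperator μ τ N) : Commute M N :=
  ContinuousLinearMap.ext fun φ => Lp.ext <| by
    filter_upwards [hM.comp hN φ, hN.comp hM φ] with x hMN hNM
    rw [mul_def, mul_def, hMN, hNM, mul_comm σ]

theorem isSelfAdjoint (hM : IsMulOperator μ σ M) (hσ : ∀ x, star (σ x) = σ x) :
    IsSelfAdjoint M := by
  rw [isSelfAdjoint_iff_isSymmetric]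
  intro φ ψ
  simp only [coe_coe, L2.inner_def]
  refine integral_congr_ae ?_
  filter_upwards [hM φ, hM ψ] with x hφ hψ
  simp only [RCLike.inner_apply, hφ, hψ, map_mul]
  rw [← RCLike.star_def, hσ]
  ring

theorem norm_le {c : ℝ} (hM : IsMulOperator μ σ M) (hc : 0 ≤ c) (hσ : ∀ x, ‖σ x‖ ≤ c) :
    ‖M‖ ≤ c :=
  opNorm_le_bound _ hc fun φ => Lp.norm_le_mul_norm_of_ae_le_mul <| by
    filter_upwards [hM φ] with x hx
    rw [hx, norm_mul]
    gcongr
    exact hσ x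

end IsMulOperator

end MulOperator

theorem isTraceClass_and_re_opTrace_compression_le {e : HilbertBasis ι ℂ H}
    {P Mf Mg R X : H →L[ℂ] H} {C : ℝ}
    (hP : IsStarProjection P) (hMf : IsSelfAdjoint Mf) (hMg : IsSelfAdjoint Mg)
    (hX : IsSelfAdjoint X) (hfg : Commute Mf Mg) (hgX : Commute Mg X) (hMg1 : ‖Mg‖ ≤ 1)
    (hR : R * (1 + (Mg ∘L Mg - 1) ∘L P) = 1) (hRC : ‖R‖ ≤ C)
    (htc : IsTraceClass e (Mf ∘L P ∘L Mf)) :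
    IsTraceClass e (X ∘L (Mf ∘L (Mg ∘L P ∘L R ∘L Mg) ∘L Mf) ∘L X) ∧
      (opTrace e (X ∘L (Mf ∘L (Mg ∘L P ∘L R ∘L Mg) ∘L Mf) ∘L X)).re
        ≤ C * (opTrace e (X ∘L (Mf ∘L P ∘L Mf) ∘L X)).re := by
  have hPf : IsHS e (P ∘L Mf) := .of_isTraceClass_adjoint_comp_self <| by
    simpa only [← star_eq_adjoint, ← mul_def, ← mul_assoc, hP.mul_mul_eq_star_mul hMf] using htc
  set B := P ∘L Mf ∘L X
  set A := P ∘L Mf ∘L X ∘L Mg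
  have hB : IsHS e B := hPf.comp_right X
  have hA : IsHS e A := hB.comp_right Mg
  have hfpf : X ∘L (Mf ∘L P ∘L Mf) ∘L X = adjoint B ∘L B := by
    simp only [B, ← star_eq_adjoint, ← mul_def, ← mul_assoc, hP.mul_mul_eq_star_mul hMf]
    simp only [star_mul, hX.star_eq, hMf.star_eq, hP.isSelfAdjoint.star_eq, mul_assoc]
  have hfpgf : X ∘L (Mf ∘L (Mg ∘L P ∘L R ∘L Mg) ∘L Mf) ∘L X = adjoint A ∘L R ∘L A := by
    have := hP.compression_eq_star_mul_mul hMf hMg hX hfg hgX hR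
    simp only [A, ← star_eq_adjoint, ← mul_def, ← mul_assoc] at this ⊢
    exact this
  refine ⟨hfpgf ▸ ⟨A, R ∘L A, hA, hA.comp_left R, rfl⟩, ?_⟩
  have hC : 0 ≤ C := (norm_nonneg R).trans hRC
  rw [hfpgf, hfpf, re_opTrace_adjoint_comp_self]
  calc (opTrace e (adjoint A ∘L R ∘L A)).re
      ≤ ‖R‖ * ∑' i, ‖A (e i)‖ ^ 2 := hA.re_opTrace_adjoint_comp_comp_le R
    _ ≤ C * (‖Mg‖ ^ 2 * ∑' i, ‖B (e i)‖ ^ 2) := by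
      gcongr
      exact hB.tsum_comp_right_le Mg
    _ ≤ C * ∑' i, ‖B (e i)‖ ^ 2 := by
      gcongr
      exact mul_le_of_le_one_left (tsum_nonneg fun _ => sq_nonneg _)
        (pow_le_one₀ (norm_nonneg _) hMg1)

theorem stmt18_general {α : Type*} {E : Type*} [MeasurableSpace E] {μ : Measure E}
    (e : HilbertBasis ι ℂ (Lp ℂ 2 μ))
    (chi : Set E → (Lp ℂ 2 μ →L[ℂ] Lp ℂ 2 μ))
    (hchi : ∀ (D : Set E) (φ : Lp ℂ 2 μ),
      (chi D φ : E → ℂ) =ᵐ[μ] fun x => D.indicator (fun _ => (1 : ℂ)) x * φ x)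
    (P : α → Lp ℂ 2 μ →L[ℂ] Lp ℂ 2 μ)
    (hprojn : ∀ a, P a ∘L P a = P a) (hsan : ∀ a, IsSelfAdjoint (P a))
    (g : E → ℝ) (hg1 : ∀ x, g x ≤ 1)
    (Mg : Lp ℂ 2 μ →L[ℂ] Lp ℂ 2 μ)
    (hMg : ∀ φ : Lp ℂ 2 μ, (Mg φ : E → ℂ) =ᵐ[μ] fun x => (Real.sqrt (g x) : ℂ) * φ x)
    (hU : ∀ a, IsUnit (1 + (Mg ∘L Mg - 1) ∘L P a))
    (C : ℝ) (hC : ∀ a, ‖Ring.inverse (1 + (Mg ∘L Mg - 1) ∘L P a)‖ ≤ C)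
    (f : E → ℝ)
    (Mf : Lp ℂ 2 μ →L[ℂ] Lp ℂ 2 μ)
    (hMf : ∀ φ : Lp ℂ 2 μ, (Mf φ : E → ℂ) =ᵐ[μ] fun x => (Real.sqrt (f x) : ℂ) * φ x)
    (htc : ∀ a, IsTraceClass e (Mf ∘L P a ∘L Mf))
    (hbound : ∃ M0 : ℝ, ∀ a, (opTrace e (Mf ∘L P a ∘L Mf)).re ≤ M0)
    (Pg : α → Lp ℂ 2 μ →L[ℂ] Lp ℂ 2 μ)
    (hPg : ∀ a, Pg a = Mg ∘L P a ∘L Ring.inverse (1 + (Mg ∘L Mg - 1) ∘L P a) ∘L Mg) :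
    (∀ a, IsTraceClass e (Mf ∘L Pg a ∘L Mf)) ∧
      (∃ M1 : ℝ, ∀ a, (opTrace e (Mf ∘L Pg a ∘L Mf)).re ≤ M1) ∧
      ∀ (B : Set E) (ε : ℝ), MeasurableSet B → 0 < ε →
        (∀ a, (opTrace e (chi Bᶜ ∘L (Mf ∘L P a ∘L Mf) ∘L chi Bᶜ)).re < ε) →
        ∀ a, (opTrace e (chi Bᶜ ∘L (Mf ∘L Pg a ∘L Mf) ∘L chi Bᶜ)).re ≤ C * ε := by
  have hMf_sa : IsSelfAdjoint Mf := IsMulOperator.isSelfAdjoint hMf fun _ => Complex.conj_ofReal _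
  have hMg_sa : IsSelfAdjoint Mg := IsMulOperator.isSelfAdjoint hMg fun _ => Complex.conj_ofReal _
  have hMg_le : ‖Mg‖ ≤ 1 := IsMulOperator.norm_le hMg zero_le_one fun x => by
    rw [Complex.norm_real, Real.norm_of_nonneg (Real.sqrt_nonneg _)]
    exact Real.sqrt_le_one.2 (hg1 x)
  have key (a) {X} (hX : IsSelfAdjoint X) (hgX : Commute Mg X) :
      IsTraceClass e (X ∘L (Mf ∘L Pg a ∘L Mf) ∘L X) ∧
        (opTrace e (X ∘L (Mf ∘L Pg a ∘L Mf) ∘L X)).re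
          ≤ C * (opTrace e (X ∘L (Mf ∘L P a ∘L Mf) ∘L X)).re := by
    rw [hPg a]
    exact isTraceClass_and_re_opTrace_compression_le ⟨hprojn a, hsan a⟩ hMf_sa hMg_sa hX
      (IsMulOperator.commute hMf hMg) hgX hMg_le (Ring.inverse_mul_cancel _ (hU a)) (hC a) (htc a)
  have hC0 (a : α) : 0 ≤ C := (norm_nonneg _).trans (hC a)
  obtain ⟨M0, hM0⟩ := hbound
  refine ⟨fun a => ?_, ⟨C * M0, fun a => ?_⟩, fun B ε _ _ hε a => ?_⟩
  · simpa only [one_def, id_comp, comp_id] using (key a (.one _) (.one_right Mg)).1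
  · calc (opTrace e (Mf ∘L Pg a ∘L Mf)).re ≤ C * (opTrace e (Mf ∘L P a ∘L Mf)).re := by
          simpa only [one_def, id_comp, comp_id] using (key a (.one _) (.one_right Mg)).2
      _ ≤ C * M0 := mul_le_mul_of_nonneg_left (hM0 a) (hC0 a)
  · have hchiB := IsMulOperator.isSelfAdjoint (hchi Bᶜ) fun x => by
      by_cases hx : x ∈ Bᶜ <;> simp [hx]
    exact (key a hchiB (IsMulOperator.commute hMg (hchi Bᶜ))).2.trans
      (mul_le_mul_of_nonneg_left (hε a).le (hC0 a))

/-- uniform trace bounds for the induced operators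
`P_a^g = sqrt g P_a (1 + (g-1) P_a)⁻¹ sqrt g` when the inverses are uniformly bounded by
`C`: uniform boundedness of the traces of `sqrt f P_a sqrt f` gives uniform boundedness of
the traces of `sqrt f P_a^g sqrt f`, and an `ε`-bound outside `B` persists up to `C ε`. -/
theorem stmt18 {α : Type*} {E : Type*} [MeasurableSpace E] {μ : Measure E} [SigmaFinite μ]
    (e : HilbertBasis ι ℂ (Lp ℂ 2 μ))
    (chi : Set E → (Lp ℂ 2 μ →L[ℂ] Lp ℂ 2 μ))
    (hchi : ∀ (D : Set E) (φ : Lp ℂ 2 μ),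
      (chi D φ : E → ℂ) =ᵐ[μ] fun x => D.indicator (fun _ => (1 : ℂ)) x * φ x)
    (P : α → Lp ℂ 2 μ →L[ℂ] Lp ℂ 2 μ)
    (hprojn : ∀ a, P a ∘L P a = P a) (hsan : ∀ a, IsSelfAdjoint (P a))
    (g : E → ℝ) (hgm : Measurable g) (hg0 : ∀ x, 0 ≤ g x) (hg1 : ∀ x, g x ≤ 1)
    (Mg : Lp ℂ 2 μ →L[ℂ] Lp ℂ 2 μ)
    (hMg : ∀ φ : Lp ℂ 2 μ, (Mg φ : E → ℂ) =ᵐ[μ] fun x => (Real.sqrt (g x) : ℂ) * φ x)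
    (hU : ∀ a, IsUnit (1 + (Mg ∘L Mg - 1) ∘L P a))
    (C : ℝ) (hC : ∀ a, ‖Ring.inverse (1 + (Mg ∘L Mg - 1) ∘L P a)‖ ≤ C)
    (f : E → ℝ) (hfm : Measurable f) (hf0 : ∀ x, 0 ≤ f x) (hfb : ∃ D : ℝ, ∀ x, f x ≤ D)
    (Mf : Lp ℂ 2 μ →L[ℂ] Lp ℂ 2 μ)
    (hMf : ∀ φ : Lp ℂ 2 μ, (Mf φ : E → ℂ) =ᵐ[μ] fun x => (Real.sqrt (f x) : ℂ) * φ x)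
    (htc : ∀ a, IsTraceClass e (Mf ∘L P a ∘L Mf))
    (hbound : ∃ M0 : ℝ, ∀ a, (opTrace e (Mf ∘L P a ∘L Mf)).re ≤ M0)
    (Pg : α → Lp ℂ 2 μ →L[ℂ] Lp ℂ 2 μ)
    (hPg : ∀ a, Pg a = Mg ∘L P a ∘L Ring.inverse (1 + (Mg ∘L Mg - 1) ∘L P a) ∘L Mg) :
    (∀ a, IsTraceClass e (Mf ∘L Pg a ∘L Mf)) ∧
      (∃ M1 : ℝ, ∀ a, (opTrace e (Mf ∘L Pg a ∘L Mf)).re ≤ M1) ∧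
      ∀ (B : Set E) (ε : ℝ), MeasurableSet B → 0 < ε →
        (∀ a, (opTrace e (chi Bᶜ ∘L (Mf ∘L P a ∘L Mf) ∘L chi Bᶜ)).re < ε) →
        ∀ a, (opTrace e (chi Bᶜ ∘L (Mf ∘L Pg a ∘L Mf) ∘L chi Bᶜ)).re ≤ C * ε :=
  stmt18_general e chi hchi P hprojn hsan g hg1 Mg hMg hU C hC f Mf hMf htc hbound Pg hPg
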